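/- Let M_1, …, M_{j−1} be n×n complex matrices and let D_{a_1}, …, D_{a_j} be n×n diagonal matrices with diagonal entries given by vectors a_1, …, a_j ∈ ℂ^n. Let p, q ∈ [1, ∞] with 1/p + 1/q = 1, and for each i set C_{M_i,q} = max_k ‖M_i(k)‖_{ℓ^q}, where M_i(k) is the k-th row of M_i. Then for all vectors u, v ∈ ℂ^n, |uᵀ D_{a_1} M_1 D_{a_2} ⋯ M_{j−1} D_{a_j} v| ≤ ‖a_1‖_{ℓ^p} ⋯ ‖a_j‖_{ℓ^p} · C_{M_1,q} ⋯ C_{M_{j−1},q} · ‖u‖_{ℓ^q} · ‖v‖_{ℓ^∞}. -/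

import Mathlib

/- STATEMENT 1: For n×n complex matrices `M_1, …, M_{j-1}` and diagonal matrices with
diagonals `a_1, …, a_j` (here `j = m + 1`), and conjugate exponents `p, q ∈ [1, ∞]`,
`|uᵀ D_{a_1} M_1 D_{a_2} ⋯ M_{j-1} D_{a_j} v| ≤
  ‖a_1‖_p ⋯ ‖a_j‖_p · C_{M_1,q} ⋯ C_{M_{j-1},q} · ‖u‖_q · ‖v‖_∞`. -/

open scoped ENNReal
open Matrix

/-- The ℓ^p norm of a finitely indexed family, `p ∈ [1, ∞]`. -/
noncomputable def lpNorm (p : ℝ≥0∞) {ι E : Type*} [Fintype ι] [SeminormedAddCommGroup E]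
    (f : ι → E) : ℝ :=
  if p = ∞ then ⨆ i, ‖f i‖ else (∑ i, ‖f i‖ ^ p.toReal) ^ (1 / p.toReal)

/-!
By Hölder, a single factor satisfies `|w ⬝ D_a x| ≤ ‖w‖_q ‖a‖_p ‖x‖_∞`. Applied
to the rows of `M`, this gives `‖M D_a x‖_∞ ≤ C_{M,q} ‖a‖_p ‖x‖_∞`; peeling the factors
`M_i D_{a_{i+1}}` off one at a time bounds the sup norm of the vector they produce from `v`,
and one last application with `w = u` concludes.
-/

section lpNorm

variable {ι E F : Type*} [Fintype ι] [SeminormedAddCommGroup E] [SeminormedAddCommGroup F]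

lemma lpNorm_nonneg (p : ℝ≥0∞) (f : ι → E) : 0 ≤ lpNorm p f := by
  unfold lpNorm
  split
  · exact Real.iSup_nonneg fun i => norm_nonneg _
  · exact Real.rpow_nonneg (Finset.sum_nonneg fun i _ => Real.rpow_nonneg (norm_nonneg _) _) _

lemma lpNorm_top (f : ι → E) : lpNorm ∞ f = ⨆ i, ‖f i‖ := if_pos rfl

lemma lpNorm_one (f : ι → E) : lpNorm 1 f = ∑ i, ‖f i‖ := by
  simp [lpNorm]

lemma norm_le_lpNorm_top (f : ι → E) (i : ι) : ‖f i‖ ≤ lpNorm ∞ f := by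
  rw [lpNorm_top]
  exact le_ciSup (f := fun i => ‖f i‖) (Set.finite_range _).bddAbove i

lemma sum_norm_mul_le_lpNorm_top_mul_lpNorm_one (f : ι → E) (g : ι → F) :
    ∑ i, ‖f i‖ * ‖g i‖ ≤ lpNorm ∞ f * lpNorm 1 g := by
  rw [lpNorm_one, Finset.mul_sum]
  gcongr with i
  exact norm_le_lpNorm_top f i

lemma sum_norm_mul_le_lpNorm_mul_lpNorm (p q : ℝ≥0∞) [p.HolderConjugate q]
    (f : ι → E) (g : ι → F) : ∑ i, ‖f i‖ * ‖g i‖ ≤ lpNorm p f * lpNorm q g := by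
  by_cases hp : p = ∞
  · obtain rfl : q = 1 := (ENNReal.HolderConjugate.eq_top_iff_eq_one p q).mp hp
    subst hp
    exact sum_norm_mul_le_lpNorm_top_mul_lpNorm_one f g
  by_cases hq : q = ∞
  · obtain rfl : p = 1 := (ENNReal.HolderConjugate.eq_top_iff_eq_one q p).mp hq
    subst hq
    simpa only [mul_comm] using sum_norm_mul_le_lpNorm_top_mul_lpNorm_one g f
  simpa [lpNorm, hp, hq] using Real.inner_le_Lp_mul_Lq_of_nonneg Finset.univ
    (ENNReal.HolderConjugate.toReal_of_ne_top hp hq) (fun i _ => norm_nonneg (f i))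
    (fun i _ => norm_nonneg (g i))

end lpNorm

section diagonal

variable {ι κ R : Type*} [Fintype ι] [DecidableEq ι] [SeminormedRing R]
  (p q : ℝ≥0∞) [p.HolderConjugate q]

lemma norm_dotProduct_diagonal_mulVec_le (w a x : ι → R) :
    ‖w ⬝ᵥ (diagonal a *ᵥ x)‖ ≤ lpNorm q w * lpNorm p a * lpNorm ∞ x := by
  calc ‖w ⬝ᵥ (diagonal a *ᵥ x)‖ = ‖∑ i, w i * (a i * x i)‖ := by
        simp only [dotProduct, mulVec_diagonal]
    _ ≤ ∑ i, ‖w i‖ * ‖a i‖ * ‖x i‖ := by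
        refine (norm_sum_le _ _).trans (Finset.sum_le_sum fun i _ => ?_)
        rw [mul_assoc]
        exact (norm_mul_le _ _).trans (by gcongr; exact norm_mul_le _ _)
    _ ≤ ∑ i, ‖w i‖ * ‖a i‖ * lpNorm ∞ x := by
        gcongr with i
        exact norm_le_lpNorm_top x i
    _ ≤ lpNorm q w * lpNorm p a * lpNorm ∞ x := by
        rw [← Finset.sum_mul]
        gcongr
        · exact lpNorm_nonneg _ _
        · exact sum_norm_mul_le_lpNorm_mul_lpNorm q p w a

lemma lpNorm_top_mulVec_diagonal_mulVec_le [Fintype κ] (M : Matrix κ ι R) (a x : ι → R) :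
    lpNorm ∞ (M *ᵥ (diagonal a *ᵥ x)) ≤
      (⨆ k, lpNorm q (M k)) * lpNorm p a * lpNorm ∞ x := by
  have hC : 0 ≤ ⨆ k, lpNorm q (M k) := Real.iSup_nonneg fun k => lpNorm_nonneg q (M k)
  rw [lpNorm_top]
  refine Real.iSup_le (fun k => ?_)
    (mul_nonneg (mul_nonneg hC (lpNorm_nonneg p a)) (lpNorm_nonneg ∞ x))
  calc ‖M k ⬝ᵥ (diagonal a *ᵥ x)‖ ≤ lpNorm q (M k) * lpNorm p a * lpNorm ∞ x :=
        norm_dotProduct_diagonal_mulVec_le p q (M k) a x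
    _ ≤ (⨆ k, lpNorm q (M k)) * lpNorm p a * lpNorm ∞ x := by
        gcongr
        · exact lpNorm_nonneg _ _
        · exact lpNorm_nonneg _ _
        · exact le_ciSup (f := fun k => lpNorm q (M k)) (Set.finite_range _).bddAbove k

lemma lpNorm_top_prod_mul_diagonal_mulVec_le {m : ℕ} (M : Fin m → Matrix ι ι R)
    (a : Fin m → ι → R) (x : ι → R) :
    lpNorm ∞ ((List.ofFn fun i => M i * diagonal (a i)).prod *ᵥ x) ≤
      (∏ i, lpNorm p (a i)) * (∏ i, ⨆ k, lpNorm q (M i k)) * lpNorm ∞ x := by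
  induction m with
  | zero => simp
  | succ m ih =>
    rw [List.ofFn_succ, List.prod_cons, ← mulVec_mulVec, ← mulVec_mulVec,
      Fin.prod_univ_succ, Fin.prod_univ_succ]
    calc _ ≤ (⨆ k, lpNorm q (M 0 k)) * lpNorm p (a 0) *
          lpNorm ∞ ((List.ofFn fun i : Fin m => M i.succ * diagonal (a i.succ)).prod *ᵥ x) :=
          lpNorm_top_mulVec_diagonal_mulVec_le p q _ _ _
      _ ≤ (⨆ k, lpNorm q (M 0 k)) * lpNorm p (a 0) * ((∏ i : Fin m, lpNorm p (a i.succ)) *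
          (∏ i : Fin m, ⨆ k, lpNorm q (M i.succ k)) * lpNorm ∞ x) := by
          refine mul_le_mul_of_nonneg_left (ih (fun i => M i.succ) (fun i => a i.succ)) ?_
          exact mul_nonneg (Real.iSup_nonneg fun k => lpNorm_nonneg q (M 0 k))
            (lpNorm_nonneg p (a 0))
      _ = _ := by ring

end diagonal

theorem diagonal_matrix_multilinear_bound_general {n m : ℕ} (p q : ℝ≥0∞)
    (hpq : 1 / p + 1 / q = 1) (M : Fin m → Matrix (Fin n) (Fin n) ℂ)
    (a : Fin (m + 1) → Fin n → ℂ) (u v : Fin n → ℂ) :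
    ‖u ⬝ᵥ ((Matrix.diagonal (a 0) *
        (List.ofFn fun i : Fin m => M i * Matrix.diagonal (a i.succ)).prod) *ᵥ v)‖ ≤
      (∏ i, lpNorm p (a i)) * (∏ i, ⨆ k, lpNorm q (M i k)) * lpNorm q u * lpNorm ∞ v := by
  have : p.HolderConjugate q := ENNReal.holderConjugate_iff.mpr (by simpa only [one_div] using hpq)
  set P := (List.ofFn fun i : Fin m => M i * diagonal (a i.succ)).prod
  have hP : lpNorm ∞ (P *ᵥ v) ≤
      (∏ i : Fin m, lpNorm p (a i.succ)) * (∏ i, ⨆ k, lpNorm q (M i k)) * lpNorm ∞ v :=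
    lpNorm_top_prod_mul_diagonal_mulVec_le p q M (fun i => a i.succ) v
  calc ‖u ⬝ᵥ ((diagonal (a 0) * P) *ᵥ v)‖
      ≤ lpNorm q u * lpNorm p (a 0) * lpNorm ∞ (P *ᵥ v) := by
        rw [← mulVec_mulVec]
        exact norm_dotProduct_diagonal_mulVec_le p q u (a 0) (P *ᵥ v)
    _ ≤ lpNorm q u * lpNorm p (a 0) *
        ((∏ i : Fin m, lpNorm p (a i.succ)) * (∏ i, ⨆ k, lpNorm q (M i k)) * lpNorm ∞ v) :=
        mul_le_mul_of_nonneg_left hP (mul_nonneg (lpNorm_nonneg q u) (lpNorm_nonneg p (a 0)))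
    _ = _ := by rw [Fin.prod_univ_succ]; ring

theorem diagonal_matrix_multilinear_bound {n m : ℕ} (p q : ℝ≥0∞) (hp : 1 ≤ p) (hq : 1 ≤ q)
    (hpq : 1 / p + 1 / q = 1) (M : Fin m → Matrix (Fin n) (Fin n) ℂ)
    (a : Fin (m + 1) → Fin n → ℂ) (u v : Fin n → ℂ) :
    ‖u ⬝ᵥ ((Matrix.diagonal (a 0) *
        (List.ofFn fun i : Fin m => M i * Matrix.diagonal (a i.succ)).prod) *ᵥ v)‖ ≤
      (∏ i, lpNorm p (a i)) * (∏ i, ⨆ k, lpNorm q (M i k)) * lpNorm q u * lpNorm ∞ v :=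
  diagonal_matrix_multilinear_bound_general p q hpq M a u v
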